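/- arXiv:2108.07395 — 5 statements merged into one kernel-verified Lean document; each statement's English description precedes it below -/
import Mathlib

section
/- Let H be a real inner product space with norm ‖·‖ and let p ≥ 2. Then there exists a constant C_p > 0 such that for all x, y ∈ H, ⟨‖x‖^(p-2)·x − ‖y‖^(p-2)·y, x − y⟩ ≥ C_p·‖x − y‖^p. -/
open RealInnerProductSpace

/-- Strong monotonicity inequality for the map `x ↦ ‖x‖^(p-2) • x` on a real
inner product space, case `p ≥ 2`. -/
theorem stmt_0 {H : Type*} [NormedAddCommGroup H] [InnerProductSpace ℝ H]
    (p : ℝ) (hp : 2 ≤ p) :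
    ∃ C : ℝ, 0 < C ∧ ∀ x y : H,
      (⟪(‖x‖ ^ (p - 2)) • x - (‖y‖ ^ (p - 2)) • y, x - y⟫) ≥ C * ‖x - y‖ ^ p := by
  have h2 : (0:ℝ) ≤ p - 2 := by linarith
  refine ⟨(2:ℝ) ^ (1 - p), Real.rpow_pos_of_pos two_pos _, fun x y => ?_⟩
  rcases eq_or_ne x y with rfl | hxy
  · simp [Real.zero_rpow (by linarith : p ≠ 0)]
  set a := ‖x‖ with ha
  set b := ‖y‖ with hb
  set u := ‖x - y‖ with hudef
  have hu : 0 < u := by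
    rw [hudef]; exact norm_pos_iff.mpr (sub_ne_zero.mpr hxy)
  set s := a ^ (p - 2) with hs
  set t := b ^ (p - 2) with ht
  have ha0 : 0 ≤ a := norm_nonneg x
  have hb0 : 0 ≤ b := norm_nonneg y
  have hs0 : 0 ≤ s := Real.rpow_nonneg ha0 _
  have ht0 : 0 ≤ t := Real.rpow_nonneg hb0 _
  have expand : ⟪s • x - t • y, x - y⟫
      = s * a ^ 2 + t * b ^ 2 - (s + t) * ⟪x, y⟫ := by
    simp only [inner_sub_left, inner_sub_right, real_inner_smul_left,
      real_inner_self_eq_norm_sq, real_inner_comm y x, ← ha, ← hb]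
    ring
  have hnorm : u ^ 2 = a ^ 2 + b ^ 2 - 2 * ⟪x, y⟫ := by
    rw [hudef, ha, hb, @norm_sub_sq_real]; ring
  -- sign lemma
  have hsign : 0 ≤ (s - t) * (a ^ 2 - b ^ 2) := by
    rcases le_total a b with h | h
    · have h1 : s ≤ t := Real.rpow_le_rpow ha0 h h2
      have h2' : a ^ 2 ≤ b ^ 2 := by nlinarith
      nlinarith
    · have h1 : t ≤ s := Real.rpow_le_rpow hb0 h h2
      have h2' : b ^ 2 ≤ a ^ 2 := by nlinarith
      nlinarith
  have step1 : ⟪s • x - t • y, x - y⟫ ≥ (1/2) * (s + t) * u ^ 2 := by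
    rw [expand]; nlinarith
  -- step 2 : 2^(2-p) * u^(p-2) ≤ s + t
  have hub : u ≤ 2 * max a b := by
    have h1 : u ≤ a + b := norm_sub_le x y
    have h2 : a ≤ max a b := le_max_left a b
    have h3 : b ≤ max a b := le_max_right a b
    linarith
  have hmax : (max a b) ^ (p - 2) ≤ s + t := by
    rcases le_total a b with h | h
    · rw [max_eq_right h]; linarith
    · rw [max_eq_left h]; linarith
  have step2 : u ^ (p - 2) ≤ 2 ^ (p - 2) * (s + t) := by
    calc u ^ (p - 2) ≤ (2 * max a b) ^ (p - 2) :=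
          Real.rpow_le_rpow hu.le hub h2
      _ = 2 ^ (p - 2) * (max a b) ^ (p - 2) :=
          Real.mul_rpow (by norm_num) (le_max_of_le_left ha0)
      _ ≤ 2 ^ (p - 2) * (s + t) := by
          apply mul_le_mul_of_nonneg_left hmax
          exact Real.rpow_nonneg (by norm_num) _
  have hup : u ^ p = u ^ (p - 2) * u ^ 2 := by
    rw [← Real.rpow_two, ← Real.rpow_add hu]
    norm_num
  have hcc : (2:ℝ) ^ (1 - p) * 2 ^ (p - 2) = 1 / 2 := by
    rw [← Real.rpow_add two_pos, show (1:ℝ) - p + (p - 2) = -1 by ring,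
      Real.rpow_neg_one]
    norm_num
  calc ⟪s • x - t • y, x - y⟫ ≥ (1/2) * (s + t) * u ^ 2 := step1
    _ ≥ (2:ℝ) ^ (1 - p) * (2 ^ (p - 2) * (s + t)) * u ^ 2 := by
        have h' : (2:ℝ) ^ (1 - p) * (2 ^ (p - 2) * (s + t))
            = (1/2) * (s + t) := by rw [← mul_assoc, hcc]
        rw [h']
    _ ≥ (2:ℝ) ^ (1 - p) * u ^ (p - 2) * u ^ 2 := by
        have hposu : (0:ℝ) ≤ u ^ 2 := sq_nonneg u
        have hpos2 : (0:ℝ) ≤ (2:ℝ) ^ (1 - p) :=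
          (Real.rpow_pos_of_pos two_pos _).le
        have := mul_le_mul_of_nonneg_left step2 hpos2
        nlinarith
    _ = (2:ℝ) ^ (1 - p) * u ^ p := by rw [hup, mul_assoc]
end

section
/- Let H be a real inner product space and p > 0. Then for all v₁, v₂ ∈ H, ⟨‖v₁‖^p·v₁ − ‖v₂‖^p·v₂, v₁ − v₂⟩ ≥ 0, i.e., the map v ↦ ‖v‖^p·v is monotone. -/
open RealInnerProductSpace

/-- The map `v ↦ ‖v‖ ^ p • v` is monotone on a real inner product space. -/
theorem stmt_2 {H : Type*} [NormedAddCommGroup H] [InnerProductSpace ℝ H]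
    (p : ℝ) (hp : 0 < p) (v₁ v₂ : H) :
    (⟪(‖v₁‖ ^ p) • v₁ - (‖v₂‖ ^ p) • v₂, v₁ - v₂⟫) ≥ 0 := by
  set x := ‖v₁‖ with hx
  set y := ‖v₂‖ with hy
  have hx0 : 0 ≤ x := norm_nonneg _
  have hy0 : 0 ≤ y := norm_nonneg _
  have ha : 0 ≤ x ^ p := Real.rpow_nonneg hx0 p
  have hb : 0 ≤ y ^ p := Real.rpow_nonneg hy0 p
  have hip : ⟪v₁, v₂⟫ ≤ x * y := real_inner_le_norm v₁ v₂
  have key : 0 ≤ (x ^ p * x - y ^ p * y) * (x - y) := by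
    rcases le_total x y with h | h
    · have h1 : x ^ p ≤ y ^ p := Real.rpow_le_rpow hx0 h hp.le
      have h2 : x ^ p * x ≤ y ^ p * y := mul_le_mul h1 h hx0 hb
      nlinarith
    · have h1 : y ^ p ≤ x ^ p := Real.rpow_le_rpow hy0 h hp.le
      have h2 : y ^ p * y ≤ x ^ p * x := mul_le_mul h1 h hy0 ha
      nlinarith
  have expand : ⟪(x ^ p) • v₁ - (y ^ p) • v₂, v₁ - v₂⟫
      = x ^ p * (x * x) + y ^ p * (y * y) - (x ^ p + y ^ p) * ⟪v₁, v₂⟫ := by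
    simp only [inner_sub_left, inner_sub_right, real_inner_smul_left,
      real_inner_self_eq_norm_mul_norm, real_inner_comm v₂ v₁]
    ring
  rw [ge_iff_le, expand]
  nlinarith [mul_nonneg (add_nonneg ha hb) (sub_nonneg.mpr hip)]
end

section
/- Let f : ℝ → ℝ be C¹ and μ₀ > 0 be such that f'(s) > −μ₀ for all |s| > M₀ (M₀ > 0 fixed). Then there exists C > 0 such that F(s) ≤ f(s)·s + (μ₀/2)·s² + C for all s with |s| > M₀, where F(s) = ∫₀ˢ f(τ)dτ. -/
open intervalIntegral

/-!
The function `G(s) = f(s)·s + (μ₀/2)·s² − F(s)` has derivative `s·(f'(s) + μ₀)`, which has the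
sign of `s` for `|s| > M₀`. Hence `G` increases on `[M₀, ∞)` and decreases on `(−∞, −M₀]`, so it
is bounded below there by `min (G M₀) (G (−M₀))`.
-/

theorem hasDerivAt_mul_self_add_sq_sub_integral {f : ℝ → ℝ} (hf : Continuous f) {f' s : ℝ}
    (hfs : HasDerivAt f f' s) (c : ℝ) :
    HasDerivAt (fun u => f u * u + c / 2 * u ^ 2 - ∫ τ in (0 : ℝ)..u, f τ) (s * (f' + c)) s := by
  have hF : HasDerivAt (fun u => ∫ τ in (0 : ℝ)..u, f τ) (f s) s :=
    (hf.integral_hasStrictDerivAt 0 s).hasDerivAt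
  have h : HasDerivAt (fun u => f u * u + c / 2 * u ^ 2 - ∫ τ in (0 : ℝ)..u, f τ)
      (f' * s + f s * 1 + c / 2 * (2 * s ^ 1) - f s) s :=
    ((hfs.mul (hasDerivAt_id' s)).add ((hasDerivAt_pow 2 s).const_mul (c / 2))).sub hF
  convert h using 1
  ring

theorem min_le_of_mul_deriv_nonneg {g : ℝ → ℝ} {M : ℝ} (hM : 0 ≤ M) (hg : Differentiable ℝ g)
    (hg' : ∀ x, M < |x| → 0 ≤ x * deriv g x) {s : ℝ} (hs : M ≤ |s|) :
    min (g M) (g (-M)) ≤ g s := by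
  rcases le_abs'.mp hs with hs | hs
  · have hanti : AntitoneOn g (Set.Iic (-M)) := by
      refine antitoneOn_of_deriv_nonpos (convex_Iic _) hg.continuous.continuousOn
        hg.differentiableOn fun x hx => ?_
      rw [interior_Iic, Set.mem_Iio] at hx
      have hx0 : x < 0 := by linarith
      exact nonpos_of_mul_nonneg_right (hg' x (by rw [abs_of_neg hx0]; linarith)) hx0
    exact min_le_of_right_le (hanti hs Set.self_mem_Iic hs)
  · have hmono : MonotoneOn g (Set.Ici M) := by
      refine monotoneOn_of_deriv_nonneg (convex_Ici _) hg.continuous.continuousOn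
        hg.differentiableOn fun x hx => ?_
      rw [interior_Ici, Set.mem_Ioi] at hx
      have hx0 : 0 < x := hM.trans_lt hx
      exact nonneg_of_mul_nonneg_right (hg' x (by rwa [abs_of_pos hx0])) hx0
    exact min_le_of_left_le (hmono Set.self_mem_Ici hs hs)

theorem stmt_8_general (f : ℝ → ℝ) (hf : ContDiff ℝ 1 f) (mu0 M0 : ℝ)
    (hM0 : 0 < M0)
    (hderiv : ∀ s : ℝ, M0 < |s| → -mu0 < deriv f s) :
    ∃ C > (0 : ℝ), ∀ s : ℝ, M0 < |s| →
      (∫ τ in (0 : ℝ)..s, f τ) ≤ f s * s + (mu0 / 2) * s ^ 2 + C := by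
  have hfd : Differentiable ℝ f := hf.differentiable one_ne_zero
  set G : ℝ → ℝ := fun s => f s * s + mu0 / 2 * s ^ 2 - ∫ τ in (0 : ℝ)..s, f τ
  have hG : ∀ s, HasDerivAt G (s * (deriv f s + mu0)) s := fun s =>
    hasDerivAt_mul_self_add_sq_sub_integral hf.continuous (hfd s).hasDerivAt mu0
  obtain ⟨m, hm⟩ : ∃ m, ∀ s, M0 < |s| → m ≤ G s := ⟨_, fun s hs =>
    min_le_of_mul_deriv_nonneg hM0.le (fun x => (hG x).differentiableAt)
      (fun x hx => by
        rw [(hG x).deriv, ← mul_assoc]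
        exact mul_nonneg (mul_self_nonneg x) (by linarith [hderiv x hx]))
      hs.le⟩
  refine ⟨|m| + 1, by positivity, fun s hs => ?_⟩
  have hms : m ≤ f s * s + mu0 / 2 * s ^ 2 - ∫ τ in (0 : ℝ)..s, f τ := hm s hs
  linarith [neg_abs_le m]

/-- If `f'(s) > −μ₀` for `|s| > M₀`, then the antiderivative `F(s) = ∫₀ˢ f`
satisfies `F(s) ≤ f(s)·s + (μ₀/2)·s² + C` for `|s| > M₀`. -/
theorem stmt_8 (f : ℝ → ℝ) (hf : ContDiff ℝ 1 f) (mu0 M0 : ℝ)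
    (hmu0 : 0 < mu0) (hM0 : 0 < M0)
    (hderiv : ∀ s : ℝ, M0 < |s| → -mu0 < deriv f s) :
    ∃ C > (0 : ℝ), ∀ s : ℝ, M0 < |s| →
      (∫ τ in (0 : ℝ)..s, f τ) ≤ f s * s + (mu0 / 2) * s ^ 2 + C :=
  stmt_8_general f hf mu0 M0 hM0 hderiv
end

section
/- Let H be a real inner product space, p > 0, and ε > 0. Then there exists C_ε > 0 such that for all x, y ∈ H, ‖x − y‖² ≤ ε/2 + C_ε·⟨‖x‖^p·x − ‖y‖^p·y, x − y⟩. -/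
open RealInnerProductSpace

/-- Combination of the strong monotonicity inequality with Young's inequality:
`‖x − y‖² ≤ ε/2 + C_ε ⟨‖x‖^p x − ‖y‖^p y, x − y⟩`. -/
theorem stmt_10 {H : Type*} [NormedAddCommGroup H] [InnerProductSpace ℝ H]
    (p ε : ℝ) (hp : 0 < p) (hε : 0 < ε) :
    ∃ C > (0 : ℝ), ∀ x y : H,
      ‖x - y‖ ^ 2 ≤ ε / 2 + C * (⟪(‖x‖ ^ p) • x - (‖y‖ ^ p) • y, x - y⟫) := by
  set δ : ℝ := Real.sqrt (ε / 2) with hδdef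
  have hδpos : 0 < δ := Real.sqrt_pos.2 (by linarith)
  have hbase : (0 : ℝ) < δ / 2 := by linarith
  have hD : (0 : ℝ) < (δ / 2) ^ p := Real.rpow_pos_of_pos hbase p
  refine ⟨2 / (δ / 2) ^ p, by positivity, fun x y => ?_⟩
  set a : ℝ := ‖x‖ ^ p with ha
  set b : ℝ := ‖y‖ ^ p with hb
  have hA : (0 : ℝ) ≤ a := Real.rpow_nonneg (norm_nonneg x) p
  have hB : (0 : ℝ) ≤ b := Real.rpow_nonneg (norm_nonneg y) p
  -- key lower bound on the inner product
  have key : (a + b) / 2 * ‖x - y‖ ^ 2 ≤ ⟪a • x - b • y, x - y⟫ := by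
    have hexp : ⟪a • x - b • y, x - y⟫
        = a * ⟪x, x⟫ - a * ⟪x, y⟫ - b * ⟪x, y⟫ + b * ⟪y, y⟫ := by
      simp only [inner_sub_left, inner_sub_right, real_inner_smul_left,
        real_inner_comm y x]
      ring
    have hxx : ⟪x, x⟫ = ‖x‖ ^ 2 := real_inner_self_eq_norm_sq x
    have hyy : ⟪y, y⟫ = ‖y‖ ^ 2 := real_inner_self_eq_norm_sq y
    have hsq : ‖x - y‖ ^ 2 = ‖x‖ ^ 2 - 2 * ⟪x, y⟫ + ‖y‖ ^ 2 :=
      norm_sub_sq_real x y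
    have hsign : 0 ≤ (a - b) * (‖x‖ ^ 2 - ‖y‖ ^ 2) := by
      rcases le_total ‖x‖ ‖y‖ with h | h
      · have h1 : a ≤ b := Real.rpow_le_rpow (norm_nonneg x) h hp.le
        have h2 : ‖x‖ ^ 2 ≤ ‖y‖ ^ 2 := by
          exact pow_le_pow_left₀ (norm_nonneg x) h 2
        nlinarith
      · have h1 : b ≤ a := Real.rpow_le_rpow (norm_nonneg y) h hp.le
        have h2 : ‖y‖ ^ 2 ≤ ‖x‖ ^ 2 := by
          exact pow_le_pow_left₀ (norm_nonneg y) h 2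
        nlinarith
    rw [hexp, hxx, hyy, hsq]
    nlinarith [hsign]
  have hIpos : 0 ≤ ⟪a • x - b • y, x - y⟫ := by
    refine le_trans ?_ key
    positivity
  rcases le_or_gt (‖x - y‖ ^ 2) (ε / 2) with hcase | hcase
  · have : 0 ≤ 2 / (δ / 2) ^ p * ⟪a • x - b • y, x - y⟫ := by positivity
    linarith
  · -- a + b ≥ (‖x-y‖/2)^p ≥ (δ/2)^p
    have htδ : δ ≤ ‖x - y‖ := by
      have h1 : δ ≤ Real.sqrt (‖x - y‖ ^ 2) := Real.sqrt_le_sqrt hcase.le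
      rwa [Real.sqrt_sq (norm_nonneg _)] at h1
    have hmax : ‖x - y‖ / 2 ≤ max ‖x‖ ‖y‖ := by
      have := norm_sub_le x y
      have h1 : ‖x‖ ≤ max ‖x‖ ‖y‖ := le_max_left _ _
      have h2 : ‖y‖ ≤ max ‖x‖ ‖y‖ := le_max_right _ _
      linarith
    have hab : (‖x - y‖ / 2) ^ p ≤ a + b := by
      have h1 : (‖x - y‖ / 2) ^ p ≤ (max ‖x‖ ‖y‖) ^ p :=
        Real.rpow_le_rpow (by positivity) hmax hp.le
      rcases le_total ‖x‖ ‖y‖ with h | h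
      · rw [max_eq_right h] at h1; linarith
      · rw [max_eq_left h] at h1; linarith
    have hδab : (δ / 2) ^ p ≤ a + b := by
      refine le_trans ?_ hab
      exact Real.rpow_le_rpow (by positivity) (by linarith) hp.le
    have hfin : ‖x - y‖ ^ 2 ≤ 2 / (δ / 2) ^ p * ⟪a • x - b • y, x - y⟫ := by
      have h1 : (δ / 2) ^ p / 2 * ‖x - y‖ ^ 2 ≤ ⟪a • x - b • y, x - y⟫ := by
        refine le_trans ?_ key
        have : (0 : ℝ) ≤ ‖x - y‖ ^ 2 := by positivity
        nlinarith
      have h2 : 2 / (δ / 2) ^ p * ((δ / 2) ^ p / 2 * ‖x - y‖ ^ 2)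
          ≤ 2 / (δ / 2) ^ p * ⟪a • x - b • y, x - y⟫ :=
        mul_le_mul_of_nonneg_left h1 (by positivity)
      have h3 : 2 / (δ / 2) ^ p * ((δ / 2) ^ p / 2 * ‖x - y‖ ^ 2)
          = ‖x - y‖ ^ 2 := by
        field_simp
      linarith
    linarith
end

section
/- Let X be a real reflexive Banach space and F : X → X* be hemicontinuous, monotone, and coercive (⟨F(x), x⟩/‖x‖ → ∞ as ‖x‖ → ∞). Then F is surjective onto X*. -/
/-!
Galerkin's method. On a finite-dimensional space, a monotone hemicontinuous operator is continuous,
and adding `ε • ⟪x, ·⟫` makes it strongly monotone; a continuous strongly monotone operator is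
surjective, by induction on the dimension: solving in the direction of a vector `e` defines a
continuous function `τ` on `eᗮ`, and the operator restricted to the graph of `τ` is again strongly
monotone on `eᗮ`. Letting `ε → 0` solves `F v = b` on every finite-dimensional subspace, with a
bound on `‖v‖` coming from coercivity. A weak limit point `v₀` of these Galerkin solutions exists
by reflexivity, and satisfies Minty's inequality `0 ≤ (b - F w) (v₀ - w)` for all `w`; testing
with `w = v₀ + t • u`, `t → 0⁺`, and hemicontinuity give `F v₀ = b`.
-/

open NormedSpace Filter Topology Module

section Operators

variable {X : Type*} [NormedAddCommGroup X] [NormedSpace ℝ X]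

def IsMonotoneOperator (F : X → StrongDual ℝ X) : Prop :=
  ∀ u v, 0 ≤ (F u - F v) (u - v)

def IsStronglyMonotoneOperator (c : ℝ) (F : X → StrongDual ℝ X) : Prop :=
  ∀ u v, c * ‖u - v‖ ^ 2 ≤ (F u - F v) (u - v)

def IsHemicontinuousOperator (F : X → StrongDual ℝ X) : Prop :=
  ∀ u v, Continuous fun t : ℝ => F (u + t • v) v

def pullbackOperator {E : Type*} [NormedAddCommGroup E] [NormedSpace ℝ E]
    (F : X → StrongDual ℝ X) (u : E →L[ℝ] X) (x : E) : StrongDual ℝ E :=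
  (F (u x)).comp u

theorem IsHemicontinuousOperator.eq_of_forall_nonneg {F : X → StrongDual ℝ X}
    (hF : IsHemicontinuousOperator F) {b : StrongDual ℝ X} {v : X}
    (h : ∀ w, 0 ≤ (b - F w) (v - w)) : F v = b := by
  have hle : ∀ u, b u ≤ F v u := by
    intro u
    have hpos : ∀ t : ℝ, 0 < t → b u ≤ F (v + t • u) u := by
      intro t ht
      have := h (v + t • u)
      rw [sub_add_cancel_left, map_neg, map_smul, smul_eq_mul, sub_apply] at this
      nlinarith
    have hlim : Tendsto (fun t : ℝ => F (v + t • u) u) (𝓝[>] 0) (𝓝 (F v u)) := by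
      simpa using ((hF v u).tendsto 0).mono_left nhdsWithin_le_nhds
    exact ge_of_tendsto hlim (eventually_nhdsWithin_of_forall hpos)
  ext u
  have := hle (-u)
  simp only [map_neg, neg_le_neg_iff] at this
  exact le_antisymm this (hle u)

theorem IsMonotoneOperator.nonneg_of_tendsto {F : X → StrongDual ℝ X}
    (hF : IsMonotoneOperator F) {ι : Type*} {l : Filter ι} [l.NeBot] {u : ι → X} {s : ι → ℝ}
    {x : X} {s₀ : ℝ} {g : StrongDual ℝ X} (hs : ∀ i, 0 ≤ s i) (hu : Tendsto u l (𝓝 x))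
    (hs₀ : Tendsto s l (𝓝 s₀)) (hg : Tendsto (fun i => s i • F (u i)) l (𝓝 g)) (w : X) :
    0 ≤ (g - s₀ • F w) (x - w) := by
  have hlim : Tendsto (fun i => (s i • F (u i) - s i • F w) (u i - w)) l
      (𝓝 ((g - s₀ • F w) (x - w))) :=
    (isBoundedBilinearMap_apply.continuous.tendsto _).comp
      ((hg.sub (hs₀.smul_const _)).prodMk_nhds (hu.sub_const w))
  refine ge_of_tendsto hlim (Eventually.of_forall fun i => ?_)
  simpa only [sub_apply, smul_apply, smul_eq_mul, ← mul_sub] using mul_nonneg (hs i) (hF (u i) w)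

variable {E : Type*} [NormedAddCommGroup E] [NormedSpace ℝ E] {F : X → StrongDual ℝ X}

theorem IsMonotoneOperator.pullback (hF : IsMonotoneOperator F) (u : E →L[ℝ] X) :
    IsMonotoneOperator (pullbackOperator F u) := fun x y => by
  simpa [pullbackOperator] using hF (u x) (u y)

theorem IsHemicontinuousOperator.pullback (hF : IsHemicontinuousOperator F) (u : E →L[ℝ] X) :
    IsHemicontinuousOperator (pullbackOperator F u) := fun x y => by
  simpa [pullbackOperator] using hF (u x) (u y)

end Operators

section FiniteDimensional

variable {E : Type*} [NormedAddCommGroup E] [NormedSpace ℝ E] [FiniteDimensional ℝ E]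
  {T : E → StrongDual ℝ E}

theorem IsMonotoneOperator.exists_eventually_norm_le (hT : IsMonotoneOperator T) {x : E}
    (𝒰 : Ultrafilter E) (hx : ↑𝒰 ≤ 𝓝 x) : ∃ C, ∀ᶠ u in (𝒰 : Filter E), ‖T u‖ ≤ C := by
  by_contra! hC
  have htop : Tendsto (fun u => ‖T u‖) 𝒰 atTop :=
    tendsto_atTop.2 fun C => (hC C).mono fun _ hu => hu.le
  have hsphere : ∀ᶠ u in (𝒰 : Filter E), ‖T u‖⁻¹ • T u ∈ Metric.sphere 0 1 := by
    filter_upwards [htop.eventually_gt_atTop 0] with u hu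
    simp [norm_smul, hu.ne']
  obtain ⟨g, hg1, hg⟩ := (isCompact_sphere (0 : StrongDual ℝ E) 1).ultrafilter_le_nhds
    (𝒰.map fun u => ‖T u‖⁻¹ • T u) (le_principal_iff.2 hsphere)
  -- after normalization, the `T w` term of the monotonicity inequality disappears in the limit
  have hnonneg : ∀ v, 0 ≤ g v := fun v => by
    simpa using hT.nonneg_of_tendsto (fun u => inv_nonneg.2 (norm_nonneg (T u))) hx
      htop.inv_tendsto_atTop hg (x - v)
  have hg0 : g = 0 := ContinuousLinearMap.ext fun v =>
    le_antisymm (by simpa using hnonneg (-v)) (hnonneg v)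
  simp [hg0] at hg1

theorem IsMonotoneOperator.continuous (hmono : IsMonotoneOperator T)
    (hhemi : IsHemicontinuousOperator T) : Continuous T := by
  refine continuous_iff_continuousAt.2 fun x => (tendsto_iff_ultrafilter _ _ _).2 fun 𝒰 hx => ?_
  obtain ⟨C, hC⟩ := hmono.exists_eventually_norm_le 𝒰 hx
  obtain ⟨g, -, hg⟩ := (isCompact_closedBall (0 : StrongDual ℝ E) C).ultrafilter_le_nhds
    (𝒰.map T) (le_principal_iff.2 (hC.mono fun u hu => mem_closedBall_zero_iff.2 hu))
  have hg' : Tendsto (fun u => (1 : ℝ) • T u) 𝒰 (𝓝 g) := by simp only [one_smul]; exact hg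
  have hgx : T x = g := hhemi.eq_of_forall_nonneg fun w => by
    simpa using hmono.nonneg_of_tendsto (fun _ => zero_le_one) hx tendsto_const_nhds hg' w
  rwa [hgx]

end FiniteDimensional

section StronglyIncreasing

variable {c : ℝ}

theorem Continuous.surjective_of_strongly_increasing {g : ℝ → ℝ} (hc : 0 < c)
    (hcont : Continuous g) (hg : ∀ s t, c * (t - s) ^ 2 ≤ (g t - g s) * (t - s)) :
    Function.Surjective g := by
  have hlin : Tendsto (fun t => g 0 + c * t) atTop atTop :=
    tendsto_atTop_add_const_left _ _ (tendsto_id.const_mul_atTop hc)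
  have hlin' : Tendsto (fun t => g 0 + c * t) atBot atBot :=
    tendsto_atBot_add_const_left _ _ (tendsto_id.const_mul_atBot hc)
  refine hcont.surjective (tendsto_atTop_mono' _ ?_ hlin) (tendsto_atBot_mono' _ ?_ hlin')
  · filter_upwards [eventually_gt_atTop 0] with t ht
    nlinarith [hg 0 t]
  · filter_upwards [eventually_lt_atBot 0] with t ht
    nlinarith [hg 0 t]

theorem mul_abs_sub_le_of_strongly_increasing {g : ℝ → ℝ}
    (hg : ∀ s t, c * (t - s) ^ 2 ≤ (g t - g s) * (t - s)) (s t : ℝ) :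
    c * |t - s| ≤ |g t - g s| := by
  rcases eq_or_ne t s with rfl | hts
  · simp
  have hpos : 0 < |t - s| := abs_pos.2 (sub_ne_zero.2 hts)
  refine le_of_mul_le_mul_right ?_ hpos
  calc c * |t - s| * |t - s| = c * (t - s) ^ 2 := by rw [mul_assoc, abs_mul_abs_self, sq]
    _ ≤ (g t - g s) * (t - s) := hg s t
    _ ≤ |g t - g s| * |t - s| := by rw [← abs_mul]; exact le_abs_self _

theorem continuous_of_forall_apply_eq {Z : Type*} [TopologicalSpace Z] {g : Z → ℝ → ℝ} {a : ℝ}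
    (hc : 0 < c) (hg : ∀ z s t, c * (t - s) ^ 2 ≤ (g z t - g z s) * (t - s))
    (hcont : ∀ t, Continuous fun z => g z t) {τ : Z → ℝ} (hτ : ∀ z, g z (τ z) = a) :
    Continuous τ := by
  refine continuous_iff_continuousAt.2 fun z₀ => tendsto_iff_dist_tendsto_zero.2 ?_
  have hbound : ∀ z, dist (τ z) (τ z₀) ≤ c⁻¹ * |g z (τ z₀) - a| := fun z => by
    rw [Real.dist_eq, le_inv_mul_iff₀ hc, ← hτ z, abs_sub_comm (g z _)]
    exact mul_abs_sub_le_of_strongly_increasing (hg z) _ _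
  have hlim : Tendsto (fun z => c⁻¹ * |g z (τ z₀) - a|) (𝓝 z₀) (𝓝 0) := by
    simpa [hτ z₀] using
      (((hcont (τ z₀)).sub (continuous_const (y := a))).abs.const_mul c⁻¹).tendsto z₀
  exact squeeze_zero (fun _ => dist_nonneg) hbound hlim

end StronglyIncreasing

section Surjectivity

variable {c : ℝ}

theorem IsStronglyMonotoneOperator.exists_continuous_section {E : Type*} [NormedAddCommGroup E]
    [NormedSpace ℝ E] {T : E → StrongDual ℝ E} (hc : 0 < c) (hT : IsStronglyMonotoneOperator c T)
    (hcont : Continuous T) {e : E} (he : e ≠ 0) (y : StrongDual ℝ E) :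
    ∃ τ : E → ℝ, Continuous τ ∧ ∀ z, T (z + τ z • e) e = y e := by
  set g : E → ℝ → ℝ := fun z t => T (z + t • e) e
  have hce : 0 < c * ‖e‖ ^ 2 := by positivity
  have hg : ∀ z s t, c * ‖e‖ ^ 2 * (t - s) ^ 2 ≤ (g z t - g z s) * (t - s) := fun z s t => by
    have := hT (z + t • e) (z + s • e)
    rw [add_sub_add_left_eq_sub, ← sub_smul, norm_smul, map_smul, smul_eq_mul, Real.norm_eq_abs,
      mul_pow, sq_abs, sub_apply] at this
    linarith
  have hsurj : ∀ z, ∃ t, g z t = y e := fun z =>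
    Continuous.surjective_of_strongly_increasing hce (by fun_prop) (hg z) (y e)
  choose τ hτ using hsurj
  exact ⟨τ, continuous_of_forall_apply_eq hce hg (fun t => by fun_prop) hτ, hτ⟩

variable {E : Type*} [NormedAddCommGroup E] [InnerProductSpace ℝ E]

theorem IsStronglyMonotoneOperator.comp_orthogonal_singleton {T : E → StrongDual ℝ E}
    (hc : 0 ≤ c) (hT : IsStronglyMonotoneOperator c T) {e : E} {τ : E → ℝ} {a : ℝ}
    (hτ : ∀ z, T (z + τ z • e) e = a) :
    IsStronglyMonotoneOperator c fun z : (ℝ ∙ e)ᗮ => (T (z + τ z • e)).comp (ℝ ∙ e)ᗮ.subtypeL := by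
  intro z w
  set Z := (z : E) + τ z • e
  set W := (w : E) + τ w • e
  have horth : inner ℝ ((z - w : (ℝ ∙ e)ᗮ) : E) ((τ z - τ w) • e) = 0 := by
    rw [real_inner_comm, real_inner_smul_left,
      Submodule.mem_orthogonal_singleton_iff_inner_right.1 (z - w).2, mul_zero]
  have hZW : Z - W = ((z - w : (ℝ ∙ e)ᗮ) : E) + (τ z - τ w) • e := by
    simp only [Z, W, Submodule.coe_sub, sub_smul]; abel
  have hnorm : ‖z - w‖ ^ 2 ≤ ‖Z - W‖ ^ 2 := by
    rw [hZW, sq, sq, norm_add_sq_eq_norm_sq_add_norm_sq_of_inner_eq_zero _ _ horth]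
    exact le_add_of_nonneg_right (mul_self_nonneg _)
  have hpair : (T Z - T W) (Z - W) = (T Z - T W) ((z - w : (ℝ ∙ e)ᗮ) : E) := by
    have hZe : T Z e = a := hτ z
    have hWe : T W e = a := hτ w
    rw [hZW, map_add, map_smul, sub_apply (T Z) (T W) e, hZe, hWe, sub_self, smul_zero, add_zero]
  calc c * ‖z - w‖ ^ 2 ≤ c * ‖Z - W‖ ^ 2 := mul_le_mul_of_nonneg_left hnorm hc
    _ ≤ (T Z - T W) (Z - W) := hT Z W
    _ = _ := hpair

theorem IsStronglyMonotoneOperator.surjective [FiniteDimensional ℝ E] {T : E → StrongDual ℝ E}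
    (hc : 0 < c) (hT : IsStronglyMonotoneOperator c T) (hcont : Continuous T) :
    Function.Surjective T := by
  induction hn : finrank ℝ E generalizing E with
  | zero =>
    have := finrank_zero_iff.1 hn
    exact fun y => ⟨0, ContinuousLinearMap.ext fun v => by simp [Subsingleton.elim v 0]⟩
  | succ n ih =>
    have := nontrivial_of_finrank_eq_succ hn
    obtain ⟨e, he⟩ := exists_ne (0 : E)
    set K := (ℝ ∙ e)ᗮ
    have hK : finrank ℝ K = n := by
      have : Fact (finrank ℝ E = n + 1) := ⟨hn⟩
      exact Submodule.finrank_orthogonal_span_singleton he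
    intro y
    obtain ⟨τ, hτc, hτ⟩ := hT.exists_continuous_section hc hcont he y
    have hScont : Continuous fun z : K => (T (z + τ z • e)).comp K.subtypeL :=
      (ContinuousLinearMap.precomp ℝ K.subtypeL).continuous.comp (by fun_prop)
    obtain ⟨z, hz⟩ := ih (hT.comp_orthogonal_singleton hc.le hτ) hScont hK (y.comp K.subtypeL)
    refine ⟨z + τ z • e, LinearMap.ext_on_codisjoint
      (codisjoint_iff.2 (Submodule.sup_orthogonal_of_hasOrthogonalProjection (K := ℝ ∙ e))) ?_ ?_⟩
    · intro v hv
      obtain ⟨a, rfl⟩ := Submodule.mem_span_singleton.1 hv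
      simp [hτ]
    · intro v hv
      exact DFunLike.congr_fun hz ⟨v, hv⟩

theorem IsMonotoneOperator.add_smul_innerSL {T : E → StrongDual ℝ E} (hmono : IsMonotoneOperator T)
    (ε : ℝ) : IsStronglyMonotoneOperator ε fun x => T x + ε • innerSL ℝ x := fun x y => by
  have := hmono x y
  rw [← real_inner_self_eq_norm_sq]
  simp only [sub_apply, add_apply, smul_apply, innerSL_apply_apply, smul_eq_mul, map_sub,
    inner_sub_left, inner_sub_right] at this ⊢
  linarith

theorem IsMonotoneOperator.exists_apply_eq_of_innerProductSpace [FiniteDimensional ℝ E]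
    {T : E → StrongDual ℝ E} {β : StrongDual ℝ E} {R : ℝ} (hmono : IsMonotoneOperator T)
    (hhemi : IsHemicontinuousOperator T)
    (hR : ∀ x, T x x ≤ β x → ‖x‖ ≤ R) : ∃ x, T x = β := by
  have hTc := hmono.continuous hhemi
  set ε : ℕ → ℝ := fun n => 1 / ((n : ℝ) + 1)
  have hε : ∀ n, 0 < ε n := fun n => by positivity
  have hreg : ∀ n, ∃ x, T x + ε n • innerSL ℝ x = β := fun n =>
    (hmono.add_smul_innerSL (ε n)).surjective (hε n) (hTc.add (by fun_prop)) β
  choose x hx using hreg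
  have hxR : ∀ n, ‖x n‖ ≤ R := fun n => hR _ <| by
    rw [← hx n, add_apply, smul_apply, innerSL_apply_apply, real_inner_self_eq_norm_sq,
      smul_eq_mul]
    nlinarith [hε n, sq_nonneg ‖x n‖]
  set 𝒰 := Ultrafilter.of (atTop : Filter ℕ)
  obtain ⟨x₀, -, hx₀⟩ := (isCompact_closedBall (0 : E) R).ultrafilter_le_nhds (𝒰.map x)
    (le_principal_iff.2 <| Filter.mem_map.2 <| Eventually.of_forall fun n =>
      mem_closedBall_zero_iff.2 (hxR n))
  have hε₀ : Tendsto ε 𝒰 (𝓝 0) :=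
    tendsto_one_div_add_atTop_nhds_zero_nat.mono_left (Ultrafilter.of_le _)
  have hlim : Tendsto (fun n => T (x n) + ε n • innerSL ℝ (x n)) 𝒰
      (𝓝 (T x₀ + (0 : ℝ) • innerSL ℝ x₀)) :=
    ((hTc.tendsto x₀).comp hx₀).add (hε₀.smul (((innerSL ℝ).continuous.tendsto x₀).comp hx₀))
  rw [zero_smul, add_zero] at hlim
  simp only [hx] at hlim
  exact ⟨x₀, tendsto_nhds_unique hlim tendsto_const_nhds⟩

end Surjectivity

theorem IsMonotoneOperator.exists_apply_eq {E : Type*} [NormedAddCommGroup E] [NormedSpace ℝ E]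
    [FiniteDimensional ℝ E] {T : E → StrongDual ℝ E} {β : StrongDual ℝ E} {R : ℝ}
    (hmono : IsMonotoneOperator T) (hhemi : IsHemicontinuousOperator T)
    (hR : ∀ x, T x x ≤ β x → ‖x‖ ≤ R) : ∃ x, T x = β := by
  let φ : EuclideanSpace ℝ (Fin (finrank ℝ E)) ≃L[ℝ] E := .ofFinrankEq (by simp)
  obtain ⟨x, hx⟩ := (hmono.pullback φ.toContinuousLinearMap).exists_apply_eq_of_innerProductSpace
    (hhemi.pullback _) (β := β.comp φ.toContinuousLinearMap)
    (R := ‖φ.symm.toContinuousLinearMap‖ * R) fun x hx => by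
      calc ‖x‖ = ‖φ.symm (φ x)‖ := by simp
        _ ≤ ‖φ.symm.toContinuousLinearMap‖ * ‖φ x‖ := φ.symm.toContinuousLinearMap.le_opNorm (φ x)
        _ ≤ _ := mul_le_mul_of_nonneg_left (hR _ hx) (norm_nonneg _)
  refine ⟨φ x, ContinuousLinearMap.ext fun v => ?_⟩
  simpa [pullbackOperator] using DFunLike.congr_fun hx (φ.symm v)

section Reflexive

variable {X : Type*} [NormedAddCommGroup X] [NormedSpace ℝ X] {F : X → StrongDual ℝ X}

theorem IsMonotoneOperator.exists_galerkin (hmono : IsMonotoneOperator F)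
    (hhemi : IsHemicontinuousOperator F) {b : StrongDual ℝ X} {R : ℝ}
    (hR : ∀ x, F x x ≤ b x → ‖x‖ ≤ R) (Y : Submodule ℝ X) [FiniteDimensional ℝ Y] :
    ∃ v ∈ Y, ‖v‖ ≤ R ∧ ∀ w ∈ Y, F v w = b w := by
  obtain ⟨y, hy⟩ := (hmono.pullback Y.subtypeL).exists_apply_eq (hhemi.pullback _)
    (β := b.comp Y.subtypeL) fun y => hR y
  have hyb : ∀ w ∈ Y, F y w = b w := fun w hw => DFunLike.congr_fun hy ⟨w, hw⟩
  exact ⟨y, y.2, hR y (hyb y y.2).le, hyb⟩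

theorem exists_norm_le_of_coercive
    (hcoer : ∀ M > (0 : ℝ), ∃ R > (0 : ℝ), ∀ x : X, ‖x‖ ≥ R → F x x ≥ M * ‖x‖)
    (b : StrongDual ℝ X) : ∃ R, ∀ x, F x x ≤ b x → ‖x‖ ≤ R := by
  obtain ⟨R, hR0, hR⟩ := hcoer (‖b‖ + 1) (by positivity)
  refine ⟨R, fun x hx => ?_⟩
  by_contra! hxR
  have hbx : b x ≤ ‖b‖ * ‖x‖ := (le_abs_self _).trans (b.le_opNorm x)
  nlinarith [hR x hxR.le, norm_nonneg x]

theorem exists_tendsto_apply_of_norm_le (hrefl : Function.Surjective (inclusionInDoubleDual ℝ X))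
    {ι : Type*} (𝒰 : Ultrafilter ι) {x : ι → X} {R : ℝ} (hx : ∀ i, ‖x i‖ ≤ R) :
    ∃ v : X, ∀ ℓ : StrongDual ℝ X, Tendsto (fun i => ℓ (x i)) 𝒰 (𝓝 (ℓ v)) := by
  set S : Set (WeakSpace ℝ X) := (toWeakSpace ℝ X).symm ⁻¹' Metric.closedBall 0 R
  have hrange : Set.range (inclusionInDoubleDualWeak ℝ X) = Set.univ := by
    refine Set.eq_univ_of_forall fun φ => ?_
    obtain ⟨v, hv⟩ := hrefl (WeakDual.toStrongDual φ)
    exact ⟨toWeakSpace ℝ X v, DFunLike.ext _ _ (DFunLike.congr_fun hv)⟩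
  have hS : IsCompact (closure S) := isCompact_closure_of_isBounded ℝ X S
    (Metric.isBounded_closedBall (x := (0 : X)) (r := R)) (by simp [hrange])
  obtain ⟨v, -, hv⟩ := hS.ultrafilter_le_nhds (𝒰.map fun i => toWeakSpace ℝ X (x i))
    (le_principal_iff.2 <| Filter.mem_map.2 <| Eventually.of_forall fun i =>
      subset_closure (by simpa [S] using hx i))
  exact ⟨(toWeakSpace ℝ X).symm v, fun ℓ => ((WeakBilin.eval_continuous _ ℓ).tendsto v).comp hv⟩

end Reflexive

theorem stmt_14_general {X : Type*} [NormedAddCommGroup X] [NormedSpace ℝ X]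
    (hrefl : Function.Surjective (inclusionInDoubleDual ℝ X))
    (F : X → StrongDual ℝ X)
    (hhemi : ∀ u v : X, Continuous fun t : ℝ => F (u + t • v) v)
    (hmono : ∀ u v : X, 0 ≤ F u (u - v) - F v (u - v))
    (hcoer : ∀ M > (0 : ℝ), ∃ R > (0 : ℝ), ∀ x : X, ‖x‖ ≥ R → F x x ≥ M * ‖x‖) :
    Function.Surjective F := by
  have hF : IsMonotoneOperator F := hmono
  intro b
  obtain ⟨R, hR⟩ := exists_norm_le_of_coercive hcoer b
  choose v hvS hvR hvb using fun S : Finset X =>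
    hF.exists_galerkin hhemi hR (Submodule.span ℝ (S : Set X))
  set 𝒰 := Ultrafilter.of (atTop : Filter (Finset X))
  obtain ⟨v₀, hv₀⟩ := exists_tendsto_apply_of_norm_le hrefl 𝒰 hvR
  refine ⟨v₀, IsHemicontinuousOperator.eq_of_forall_nonneg hhemi fun w => ?_⟩
  have hminty : ∀ᶠ S in (𝒰 : Filter (Finset X)), 0 ≤ (b - F w) (v S - w) := by
    filter_upwards [Ultrafilter.of_le _ (eventually_ge_atTop {w})] with S hS
    have hw : w ∈ Submodule.span ℝ (S : Set X) :=
      Submodule.subset_span (hS (Finset.mem_singleton_self w))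
    have hgal : (b - F w) (v S - w) = (F (v S) - F w) (v S - w) := by
      simp only [sub_apply, map_sub, hvb S _ (hvS S), hvb S w hw]
    exact hgal ▸ hF (v S) w
  exact ge_of_tendsto (by simpa only [map_sub] using (hv₀ (b - F w)).sub_const ((b - F w) w))
    hminty

/-- Browder–Minty theorem: a hemicontinuous, monotone, coercive map from a real
reflexive Banach space to its dual is surjective. Reflexivity is expressed by
surjectivity of the canonical inclusion into the double dual. -/
theorem stmt_14 {X : Type*} [NormedAddCommGroup X] [NormedSpace ℝ X]
    [CompleteSpace X]
    (hrefl : Function.Surjective (inclusionInDoubleDual ℝ X))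
    (F : X → StrongDual ℝ X)
    (hhemi : ∀ u v : X, Continuous fun t : ℝ => F (u + t • v) v)
    (hmono : ∀ u v : X, 0 ≤ F u (u - v) - F v (u - v))
    (hcoer : ∀ M > (0 : ℝ), ∃ R > (0 : ℝ), ∀ x : X, ‖x‖ ≥ R → F x x ≥ M * ‖x‖) :
    Function.Surjective F :=
  stmt_14_general hrefl F hhemi hmono hcoer
end
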